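/- arXiv:1912.04456 — 2 statements merged into one kernel-verified Lean document; each statement's English description precedes it below -/
import Mathlib

section
/- (Lemma 2, deterministic form) Let ρ > 0, β > 0, γ > 0 and δ > 0 with 0.8 δ ≥ γ. Let M ≥ 1 and let (s_j, y_j) for j = 1, …, M be pairs of vectors in ℝⁿ with s_j ≠ 0, ‖y_j‖² ≤ ρ² s_jᵀs_j and |s_jᵀy_j| ≤ ρ s_jᵀs_j, and let τ_0, τ_1, …, τ_M be scalars with β ≤ τ_j ≤ β + ρ + γ for all j. For each j define θ_j = (0.8 (τ_j + δ) s_jᵀs_j − γ s_jᵀs_j)/((τ_j + δ) s_jᵀs_j − s_jᵀy_j) if s_jᵀy_j ≤ 0.2 (τ_j + δ) s_jᵀs_j + γ s_jᵀs_j and θ_j = 1 otherwise, and ỹ_j = θ_j y_j + (1 − θ_j)(τ_j + δ) s_j − γ s_j. Set B^{(0)} = τ_0 I and recursively B^{(j)} = B^{(j−1)} + (ỹ_j ỹ_jᵀ)/(s_jᵀỹ_j) − (B^{(j−1)} s_j s_jᵀ B^{(j−1)})/(s_jᵀ B^{(j−1)} s_j) + γ I for j = 1, …, M. Then each B^{(j)}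 is symmetric positive definite and ‖B^{(M)}‖ ≤ β + ρ + γ + M (Q + 5ρ + γ), where Q = max{ 5(ρ + γ)²/(β + δ) + 5(β + δ), 5(ρ + γ)²/(β + ρ + γ + δ) + 5(β + ρ + γ + δ) }. -/
open Matrix

/-- The spectral norm (operator 2-norm) of a real square matrix. -/
noncomputable def specNorm {n : ℕ} (A : Matrix (Fin n) (Fin n) ℝ) : ℝ :=
  ‖Matrix.toEuclideanCLM (𝕜 := ℝ) A‖


section Aux

lemma dotn {n : ℕ} (x : Fin n → ℝ) : 0 ≤ x ⬝ᵥ x :=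
  Finset.sum_nonneg fun _ _ => mul_self_nonneg _

lemma dotp {n : ℕ} {x : Fin n → ℝ} (hx : x ≠ 0) : 0 < x ⬝ᵥ x :=
  (dotn x).lt_of_ne' fun h => hx (dotProduct_self_eq_zero.mp h)

lemma dotCS {n : ℕ} (u v : Fin n → ℝ) : (u ⬝ᵥ v) ^ 2 ≤ (u ⬝ᵥ u) * (v ⬝ᵥ v) := by
  simpa [dotProduct, sq] using Finset.sum_mul_sq_le_sq_mul_sq Finset.univ u v

lemma vmv_mulVec {n : ℕ} (u v x : Fin n → ℝ) :
    vecMulVec u v *ᵥ x = (v ⬝ᵥ x) • u := by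
  ext i
  simp [Matrix.mulVec, Matrix.vecMulVec, dotProduct, Finset.mul_sum, mul_assoc,
    mul_comm, mul_left_comm]

lemma herm_tr {n : ℕ} {A : Matrix (Fin n) (Fin n) ℝ} (h : A.IsHermitian) : Aᵀ = A := by
  rw [← Matrix.conjTranspose_eq_transpose_of_trivial]; exact h

lemma vmv_herm {n : ℕ} (u : Fin n → ℝ) : (vecMulVec u u).IsHermitian := by
  ext i j
  simp [Matrix.conjTranspose_apply, Matrix.vecMulVec_apply, mul_comm]

lemma herm_smul {n : ℕ} {A : Matrix (Fin n) (Fin n) ℝ} (h : A.IsHermitian) (c : ℝ) :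
    (c • A).IsHermitian := by
  unfold Matrix.IsHermitian at *
  rw [Matrix.conjTranspose_smul, h]
  simp

lemma dot_mulVec_symm {n : ℕ} {A : Matrix (Fin n) (Fin n) ℝ} (h : Aᵀ = A)
    (x w : Fin n → ℝ) : x ⬝ᵥ (A *ᵥ w) = (A *ᵥ x) ⬝ᵥ w := by
  rw [Matrix.dotProduct_mulVec, ← Matrix.mulVec_transpose, h]

lemma psdCS {n : ℕ} {A : Matrix (Fin n) (Fin n) ℝ} (hA : A.PosSemidef)
    (x z : Fin n → ℝ) :
    (x ⬝ᵥ (A *ᵥ z)) ^ 2 ≤ (x ⬝ᵥ (A *ᵥ x)) * (z ⬝ᵥ (A *ᵥ z)) := by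
  have hAT : Aᵀ = A := herm_tr hA.1
  have hs : z ⬝ᵥ (A *ᵥ x) = x ⬝ᵥ (A *ᵥ z) := by rw [dot_mulVec_symm hAT, dotProduct_comm]
  have q : ∀ u v : ℝ, 0 ≤ u^2 * (x ⬝ᵥ (A *ᵥ x)) + 2*u*v*(x ⬝ᵥ (A *ᵥ z))
      + v^2 * (z ⬝ᵥ (A *ᵥ z)) := by
    intro u v
    have h := hA.dotProduct_mulVec_nonneg (u • x + v • z)
    simp only [star_trivial, Matrix.mulVec_add, Matrix.mulVec_smul, dotProduct_add,
      add_dotProduct, dotProduct_smul, smul_dotProduct, smul_eq_mul, hs] at h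
    nlinarith [h]
  generalize x ⬝ᵥ (A *ᵥ x) = a at q ⊢
  generalize x ⬝ᵥ (A *ᵥ z) = b at q ⊢
  generalize z ⬝ᵥ (A *ᵥ z) = c at q ⊢
  have h1 := q c (-b)
  have h2 := q (-b) a
  have h3 := q 1 (-b)
  have ha := q 1 0
  have hc := q 0 1
  rcases (show 0 ≤ c by nlinarith [hc]).lt_or_eq with hc' | hc'
  · have := le_of_mul_le_mul_left (show c*0 ≤ c*(a*c-b^2) by nlinarith [h1]) hc'
    nlinarith
  · rcases (show 0 ≤ a by nlinarith [ha]).lt_or_eq with ha' | ha'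
    · have := le_of_mul_le_mul_left (show a*0 ≤ a*(a*c-b^2) by nlinarith [h2]) ha'
      nlinarith
    · subst hc' ha'
      nlinarith [h3]

lemma normE {n : ℕ} (v : Fin n → ℝ) :
    ‖(WithLp.equiv 2 (Fin n → ℝ)).symm v‖ = Real.sqrt (v ⬝ᵥ v) := by
  rw [EuclideanSpace.norm_eq]
  congr 1
  simp [dotProduct, Real.norm_eq_abs, sq_abs, sq]

lemma specNorm_le_of_quad {n : ℕ} {A : Matrix (Fin n) (Fin n) ℝ} (hA : A.PosSemidef)
    {K : ℝ} (hK : 0 ≤ K) (h : ∀ x, x ⬝ᵥ (A *ᵥ x) ≤ K * (x ⬝ᵥ x)) :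
    ‖Matrix.toEuclideanCLM (𝕜 := ℝ) A‖ ≤ K := by
  have hAT : Aᵀ = A := herm_tr hA.1
  have step : ∀ x : Fin n → ℝ, (A *ᵥ x) ⬝ᵥ (A *ᵥ x) ≤ K ^ 2 * (x ⬝ᵥ x) := by
    intro x
    set r := (A *ᵥ x) ⬝ᵥ (A *ᵥ x) with hr
    have hr0 : 0 ≤ r := dotn _
    have h1 : x ⬝ᵥ (A *ᵥ (A *ᵥ x)) = r := by
      rw [dot_mulVec_symm hAT]
    have h2 : r ^ 2 ≤ (x ⬝ᵥ (A *ᵥ x)) * ((A *ᵥ x) ⬝ᵥ (A *ᵥ (A *ᵥ x))) := by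
      have := psdCS hA x (A *ᵥ x)
      rwa [h1] at this
    have h3 := h x
    have h4 := h (A *ᵥ x)
    have h5 : 0 ≤ x ⬝ᵥ (A *ᵥ x) := by simpa only [star_trivial] using hA.dotProduct_mulVec_nonneg x
    have h6 : 0 ≤ x ⬝ᵥ x := dotn x
    rcases eq_or_lt_of_le hr0 with h7 | h7
    · nlinarith [sq_nonneg K, dotn x]
    · nlinarith [mul_le_mul h3 h4 (by simpa only [star_trivial] using hA.dotProduct_mulVec_nonneg (A *ᵥ x) : 0 ≤ (A *ᵥ x) ⬝ᵥ (A *ᵥ (A *ᵥ x))) (mul_nonneg hK h6)]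
  apply ContinuousLinearMap.opNorm_le_bound _ hK
  intro x
  set v : Fin n → ℝ := WithLp.equiv 2 (Fin n → ℝ) x with hv
  have hx : x = (WithLp.equiv 2 (Fin n → ℝ)).symm v := rfl
  have happ : Matrix.toEuclideanCLM (𝕜 := ℝ) A x
      = (WithLp.equiv 2 (Fin n → ℝ)).symm (A *ᵥ v) := by
    rw [hx]; rfl
  rw [happ, hx, normE, normE]
  calc Real.sqrt ((A *ᵥ v) ⬝ᵥ (A *ᵥ v)) ≤ Real.sqrt (K ^ 2 * (v ⬝ᵥ v)) :=
        Real.sqrt_le_sqrt (step v)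
    _ = K * Real.sqrt (v ⬝ᵥ v) := by
        rw [Real.sqrt_mul (sq_nonneg K), Real.sqrt_sq hK]

lemma conv_max {A l u t : ℝ} (hl : 0 < l) (hlt : l ≤ t) (htu : t ≤ u) :
    A / t + 5 * t ≤ max (A / l + 5 * l) (A / u + 5 * u) := by
  have ht : 0 < t := lt_of_lt_of_le hl hlt
  have hu : 0 < u := lt_of_lt_of_le ht htu
  rcases le_total A (5 * (u * t)) with h | h
  · refine le_max_of_le_right ?_
    rw [div_add' _ _ _ ht.ne', div_add' _ _ _ hu.ne', div_le_div_iff₀ ht hu]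
    nlinarith
  · refine le_max_of_le_left ?_
    rw [div_add' _ _ _ ht.ne', div_add' _ _ _ hl.ne', div_le_div_iff₀ ht hl]
    nlinarith [mul_nonneg (sub_nonneg.2 hlt) (sub_nonneg.2
      (show 5*(l*t) ≤ A by nlinarith [mul_le_mul_of_nonneg_right hlt ht.le]))]

set_option maxHeartbeats 1600000 in
lemma scalar_step {ρ β γ δ S P Y t θ Q : ℝ}
    (hρ : 0 < ρ) (hβ : 0 < β) (hγ : 0 < γ) (hδ : 0 < δ) (hδγ : γ ≤ 0.8 * δ)
    (hS : 0 < S) (hY : Y ≤ ρ^2 * S) (hP : |P| ≤ ρ * S)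
    (ht1 : β + δ ≤ t) (ht2 : t ≤ β + ρ + γ + δ)
    (hθ : θ = if P ≤ 0.2 * (t * S) + γ * S then (0.8*(t*S) - γ*S)/(t*S - P) else 1)
    (hQ : Q = max (5*(ρ+γ)^2/(β+δ) + 5*(β+δ)) (5*(ρ+γ)^2/(β+ρ+γ+δ) + 5*(β+ρ+γ+δ))) :
    0 < θ * P + ((1-θ)*t)*S - γ*S
    ∧ θ^2*Y + 2*(θ*((1-θ)*t - γ))*P + ((1-θ)*t - γ)^2*S
        ≤ (Q + 5*ρ) * (θ * P + ((1-θ)*t)*S - γ*S) := by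
  have ht : 0 < t := by linarith
  have hγt : γ < 0.8 * t := by nlinarith
  have hQt : 5*(ρ+γ)^2/t + 5*t ≤ Q := by
    rw [hQ]; exact conv_max (by linarith) ht1 ht2
  have hQt' : 5*(ρ+γ)^2 + 5*t^2 ≤ Q*t := by
    have h0 := mul_le_mul_of_nonneg_right hQt ht.le
    rw [add_mul, div_mul_cancel₀ _ ht.ne'] at h0
    nlinarith [h0]
  have hQpos : 0 < Q := by nlinarith [sq_nonneg (ρ+γ), sq_nonneg t]
  have hPlow : -(ρ*S) ≤ P := (abs_le.mp hP).1
  have hPhigh : P ≤ ρ*S := (abs_le.mp hP).2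
  obtain ⟨c, hc⟩ : ∃ x : ℝ, x = (1-θ)*t - γ := ⟨_, rfl⟩
  obtain ⟨D, hD⟩ : ∃ x : ℝ, x = θ * P + ((1-θ)*t)*S - γ*S := ⟨_, rfl⟩
  rw [← hc, ← hD]
  by_cases h : P ≤ 0.2 * (t * S) + γ * S
  · rw [if_pos h] at hθ
    have hdenom : 0 < t*S - P := by nlinarith
    have hnum : 0 < 0.8*(t*S) - γ*S := by nlinarith
    have hθd : θ * (t*S - P) = 0.8*(t*S) - γ*S := by
      rw [hθ]; field_simp
    have hθpos : 0 < θ := by rw [hθ]; positivity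
    have hθ1 : θ ≤ 1 := by
      rw [hθ, div_le_one hdenom]; linarith
    have hDval : D = 0.2*(t*S) := by
      rw [hD]; linear_combination -hθd
    have hθP : θ * P = D - c*S := by rw [hD, hc]; ring
    clear hθ hQ hQt hθd hD hc hdenom hnum h
    constructor
    · rw [hDval]; positivity
    · have h1 : θ^2*Y ≤ ρ^2*S := by
        nlinarith [mul_le_mul_of_nonneg_left hY (sq_nonneg θ),
          mul_nonneg (mul_nonneg (sq_nonneg ρ) hS.le)
            (mul_nonneg (sub_nonneg.2 hθ1) (by linarith : (0:ℝ) ≤ 1 + θ))]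
      have h2 : 2*c*D - 2*(c^2*S) + c^2*S ≤ 0.04*t^2*S := by
        rw [hDval]
        nlinarith [mul_nonneg hS.le (sq_nonneg (0.2*t - c))]
      have h3 : ρ^2*S + 0.04*t^2*S ≤ (Q + 5*ρ) * (0.2*(t*S)) := by
        nlinarith [mul_le_mul_of_nonneg_right hQt' hS.le,
          mul_nonneg (mul_nonneg hρ.le ht.le) hS.le,
          mul_nonneg (mul_nonneg hρ.le hγ.le) hS.le,
          mul_nonneg (sq_nonneg γ) hS.le,
          mul_nonneg (sq_nonneg t) hS.le]
      have hN : θ^2*Y + 2*(θ*c)*P + c^2*S = θ^2*Y + 2*c*D - 2*(c^2*S) + c^2*S := by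
        have h5 : 2*(θ*c)*P = 2*c*(θ*P) := by ring
        rw [h5, hθP]; ring
      rw [hN]
      calc θ^2*Y + 2*c*D - 2*(c^2*S) + c^2*S ≤ ρ^2*S + 0.04*t^2*S := by linarith
        _ ≤ (Q + 5*ρ) * (0.2*(t*S)) := h3
        _ = (Q + 5*ρ) * D := by rw [hDval]
  · rw [if_neg h] at hθ
    push_neg at h
    have hDval : D = P - γ*S := by rw [hD, hθ]; ring
    have hD' : 0.2*(t*S) < D := by rw [hDval]; nlinarith
    have hcval : c = -γ := by rw [hc, hθ]; ring
    have hθval : θ = 1 := hθ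
    clear hθ hQ hQt hD hc h
    constructor
    · nlinarith [mul_pos ht hS]
    · have hN : θ^2*Y + 2*(θ*c)*P + c^2*S ≤ (ρ+γ)^2*S := by
        rw [hcval, hθval]
        nlinarith [mul_nonneg (mul_nonneg hγ.le hρ.le) hS.le]
      have hQ5 : 0 ≤ Q + 5*ρ := by linarith
      calc θ^2*Y + 2*(θ*c)*P + c^2*S ≤ (ρ+γ)^2*S := hN
        _ ≤ (Q + 5*ρ) * (0.2*(t*S)) := by
            nlinarith [mul_le_mul_of_nonneg_right hQt' hS.le,
              mul_nonneg (mul_nonneg hρ.le ht.le) hS.le,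
              mul_nonneg (sq_nonneg t) hS.le]
        _ ≤ (Q + 5*ρ) * D := mul_le_mul_of_nonneg_left hD'.le hQ5

lemma quad_exp {n : ℕ} (B : Matrix (Fin n) (Fin n) ℝ) (u w x : Fin n → ℝ) (a b g : ℝ) :
    x ⬝ᵥ ((B + a • vecMulVec u u - b • vecMulVec w w + g • 1) *ᵥ x)
      = x ⬝ᵥ (B *ᵥ x) + a * (u ⬝ᵥ x)^2 - b * (w ⬝ᵥ x)^2 + g * (x ⬝ᵥ x) := by
  simp only [Matrix.add_mulVec, Matrix.sub_mulVec, Matrix.smul_mulVec,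
    Matrix.one_mulVec, dotProduct_add, dotProduct_sub,
    dotProduct_smul, smul_eq_mul, vmv_mulVec]
  rw [dotProduct_comm x u, dotProduct_comm x w]
  ring

end Aux

set_option maxHeartbeats 1600000 in
/-- **Lemma 2, deterministic form.** The stochastic damped regularized
L-BFGS recursion produces symmetric positive definite matrices whose spectral norms are
bounded by `β + ρ + γ + M (Q + 5ρ + γ)`. -/
theorem sd_reg_lbfgs_norm_upper_bound {n : ℕ} (ρ β γ δ : ℝ)
    (hρ : 0 < ρ) (hβ : 0 < β) (hγ : 0 < γ) (hδ : 0 < δ) (hδγ : γ ≤ 0.8 * δ)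
    (M : ℕ) (hM : 1 ≤ M)
    (s y : Fin M → Fin n → ℝ) (hs : ∀ j, s j ≠ 0)
    (hy : ∀ j, y j ⬝ᵥ y j ≤ ρ ^ 2 * (s j ⬝ᵥ s j))
    (hsy : ∀ j, |s j ⬝ᵥ y j| ≤ ρ * (s j ⬝ᵥ s j))
    (τ : Fin (M + 1) → ℝ) (hτ : ∀ j, β ≤ τ j ∧ τ j ≤ β + ρ + γ)
    (θ : Fin M → ℝ)
    (hθ : ∀ j, θ j = if s j ⬝ᵥ y j ≤ 0.2 * ((τ j.succ + δ) * (s j ⬝ᵥ s j)) + γ * (s j ⬝ᵥ s j)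
        then (0.8 * ((τ j.succ + δ) * (s j ⬝ᵥ s j)) - γ * (s j ⬝ᵥ s j))
          / ((τ j.succ + δ) * (s j ⬝ᵥ s j) - s j ⬝ᵥ y j)
        else 1)
    (yt : Fin M → Fin n → ℝ)
    (hyt : ∀ j, yt j = θ j • y j + ((1 - θ j) * (τ j.succ + δ)) • s j - γ • s j)
    (Bmat : Fin (M + 1) → Matrix (Fin n) (Fin n) ℝ)
    (hB0 : Bmat 0 = τ 0 • (1 : Matrix (Fin n) (Fin n) ℝ))
    (hBrec : ∀ j : Fin M, Bmat j.succ = Bmat j.castSucc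
        + (s j ⬝ᵥ yt j)⁻¹ • vecMulVec (yt j) (yt j)
        - (s j ⬝ᵥ (Bmat j.castSucc *ᵥ s j))⁻¹ •
            vecMulVec (Bmat j.castSucc *ᵥ s j) (s j ᵥ* Bmat j.castSucc)
        + γ • (1 : Matrix (Fin n) (Fin n) ℝ))
    (Q : ℝ)
    (hQ : Q = max (5 * (ρ + γ) ^ 2 / (β + δ) + 5 * (β + δ))
        (5 * (ρ + γ) ^ 2 / (β + ρ + γ + δ) + 5 * (β + ρ + γ + δ))) :
    (∀ j, (Bmat j).PosDef)
    ∧ specNorm (Bmat (Fin.last M)) ≤ β + ρ + γ + M * (Q + 5 * ρ + γ) := by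
  -- scalar facts for each step
  have hstep : ∀ j : Fin M,
      0 < s j ⬝ᵥ yt j ∧ yt j ⬝ᵥ yt j ≤ (Q + 5*ρ) * (s j ⬝ᵥ yt j) := by
    intro j
    have hS : 0 < s j ⬝ᵥ s j := dotp (hs j)
    have hsc := scalar_step (t := τ j.succ + δ) (θ := θ j) (P := s j ⬝ᵥ y j)
      (Y := y j ⬝ᵥ y j) hρ hβ hγ hδ hδγ hS (hy j) (hsy j)
      (by linarith [(hτ j.succ).1]) (by linarith [(hτ j.succ).2]) (hθ j) hQ
    have hDexp : s j ⬝ᵥ yt j = θ j * (s j ⬝ᵥ y j)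
        + ((1 - θ j)*(τ j.succ + δ))*(s j ⬝ᵥ s j) - γ*(s j ⬝ᵥ s j) := by
      rw [hyt j]
      simp only [dotProduct_add, dotProduct_sub, dotProduct_smul,
        smul_eq_mul]
    have hNexp : yt j ⬝ᵥ yt j = (θ j)^2*(y j ⬝ᵥ y j)
        + 2*(θ j*((1-θ j)*(τ j.succ + δ) - γ))*(s j ⬝ᵥ y j)
        + ((1-θ j)*(τ j.succ + δ) - γ)^2*(s j ⬝ᵥ s j) := by
      rw [hyt j]
      simp only [dotProduct_add, dotProduct_sub, dotProduct_smul,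
        add_dotProduct, sub_dotProduct, smul_dotProduct, smul_eq_mul]
      rw [dotProduct_comm (y j) (s j)]
      ring
    constructor
    · rw [hDexp]; exact hsc.1
    · rw [hDexp, hNexp]; exact hsc.2
  have hQpos : 0 < Q := by
    have h1 : 5 * (ρ + γ) ^ 2 / (β + δ) + 5 * (β + δ) ≤ Q := by
      rw [hQ]; exact le_max_left _ _
    have h2 : 0 < 5 * (ρ + γ) ^ 2 / (β + δ) + 5 * (β + δ) := by positivity
    linarith
  -- main induction
  have key : ∀ j : Fin (M+1), (Bmat j).PosDef ∧
      ∀ x, x ⬝ᵥ (Bmat j *ᵥ x) ≤ (β + ρ + γ + (j : ℕ) * (Q + 5*ρ + γ)) * (x ⬝ᵥ x) := by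
    intro j
    induction j using Fin.induction with
    | zero =>
      constructor
      · rw [hB0]
        refine Matrix.PosDef.of_dotProduct_mulVec_pos ?_ ?_
        · rw [Matrix.IsHermitian, Matrix.conjTranspose_smul, Matrix.conjTranspose_one]
          simp
        · intro x hx
          have h1 : (τ 0 • (1 : Matrix (Fin n) (Fin n) ℝ)) *ᵥ x = τ 0 • x := by
            rw [Matrix.smul_mulVec, Matrix.one_mulVec]
          rw [h1]
          simp only [star_trivial, dotProduct_smul, smul_eq_mul]
          exact mul_pos (lt_of_lt_of_le hβ (hτ 0).1) (dotp hx)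
      · intro x
        rw [hB0, Matrix.smul_mulVec, Matrix.one_mulVec, dotProduct_smul,
          smul_eq_mul]
        have h2 : (((0 : Fin (M+1)) : ℕ) : ℝ) = 0 := by norm_num
        rw [h2]
        have := dotn x
        nlinarith [(hτ 0).2, (hτ 0).1]
    | succ i ih =>
      obtain ⟨hPD, hquad⟩ := ih
      have hBT : (Bmat i.castSucc)ᵀ = Bmat i.castSucc := herm_tr hPD.1
      have hsB : s i ᵥ* Bmat i.castSucc = Bmat i.castSucc *ᵥ s i := by
        conv_lhs => rw [← hBT]
        exact Matrix.vecMul_transpose _ _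
      have hrec := hBrec i
      rw [hsB] at hrec
      have hsBs : 0 < s i ⬝ᵥ (Bmat i.castSucc *ᵥ s i) := by
        have := hPD.dotProduct_mulVec_pos (hs i)
        simpa using this
      have hD := (hstep i).1
      have hN := (hstep i).2
      have hqe : ∀ x, x ⬝ᵥ (Bmat i.succ *ᵥ x)
          = x ⬝ᵥ (Bmat i.castSucc *ᵥ x) + (s i ⬝ᵥ yt i)⁻¹ * (yt i ⬝ᵥ x)^2
            - (s i ⬝ᵥ (Bmat i.castSucc *ᵥ s i))⁻¹ * ((Bmat i.castSucc *ᵥ s i) ⬝ᵥ x)^2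
            + γ * (x ⬝ᵥ x) := by
        intro x
        rw [hrec]
        exact quad_exp _ _ _ _ _ _ _
      have hCSB : ∀ x, (s i ⬝ᵥ (Bmat i.castSucc *ᵥ s i))⁻¹
          * ((Bmat i.castSucc *ᵥ s i) ⬝ᵥ x)^2 ≤ x ⬝ᵥ (Bmat i.castSucc *ᵥ x) := by
        intro x
        rw [dotProduct_comm (Bmat i.castSucc *ᵥ s i) x, inv_mul_le_iff₀ hsBs]
        have := psdCS hPD.posSemidef x (s i)
        linarith [this, mul_comm (x ⬝ᵥ (Bmat i.castSucc *ᵥ x)) (s i ⬝ᵥ (Bmat i.castSucc *ᵥ s i))]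
      constructor
      · refine Matrix.PosDef.of_dotProduct_mulVec_pos ?_ ?_
        · rw [hrec]
          exact (((hPD.1.add (herm_smul (vmv_herm (yt i)) _)).sub
            (herm_smul (vmv_herm (Bmat i.castSucc *ᵥ s i)) _)).add
            (herm_smul Matrix.isHermitian_one γ))
        · intro x hx
          have h0 := hqe x
          simp only [star_trivial]
          rw [h0]
          have h1 := hCSB x
          have h2 : 0 ≤ (s i ⬝ᵥ yt i)⁻¹ * (yt i ⬝ᵥ x)^2 :=
            mul_nonneg (inv_nonneg.2 hD.le) (sq_nonneg _)
          have h3 : 0 < γ * (x ⬝ᵥ x) := mul_pos hγ (dotp hx)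
          have h4 : 0 ≤ x ⬝ᵥ (Bmat i.castSucc *ᵥ x) := by
            have := hPD.posSemidef.dotProduct_mulVec_nonneg x
            simpa using this
          linarith
      · intro x
        rw [hqe x]
        have h1 := hCSB x
        have h2 : (s i ⬝ᵥ yt i)⁻¹ * (yt i ⬝ᵥ x)^2 ≤ (Q + 5*ρ) * (x ⬝ᵥ x) := by
          rw [inv_mul_le_iff₀ hD]
          calc (yt i ⬝ᵥ x)^2 ≤ (yt i ⬝ᵥ yt i) * (x ⬝ᵥ x) := dotCS _ _
            _ ≤ ((Q + 5*ρ) * (s i ⬝ᵥ yt i)) * (x ⬝ᵥ x) :=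
                mul_le_mul_of_nonneg_right hN (dotn x)
            _ = (s i ⬝ᵥ yt i) * ((Q + 5*ρ) * (x ⬝ᵥ x)) := by ring
        have h3 := hquad x
        have h4 : 0 ≤ (s i ⬝ᵥ (Bmat i.castSucc *ᵥ s i))⁻¹
            * ((Bmat i.castSucc *ᵥ s i) ⬝ᵥ x)^2 :=
          mul_nonneg (inv_nonneg.2 hsBs.le) (sq_nonneg _)
        have hcast : ((i.succ : Fin (M+1)) : ℕ) = ((i.castSucc : Fin (M+1)) : ℕ) + 1 := by
          simp
        rw [hcast]
        push_cast
        nlinarith [dotn x]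
  refine ⟨fun j => (key j).1, ?_⟩
  have hKnonneg : 0 ≤ β + ρ + γ + M * (Q + 5*ρ + γ) := by
    have : (0:ℝ) ≤ (M:ℝ) := Nat.cast_nonneg M
    nlinarith
  have hlast := (key (Fin.last M)).2
  rw [Fin.val_last] at hlast
  exact specNorm_le_of_quad (key (Fin.last M)).1.posSemidef hKnonneg
    (by intro x; have := hlast x; linarith [this])
end

section
/- (Lemma 3, deterministic form) Let ρ > 0, β > 0, γ > 0 and δ > 0 with 0.8 δ ≥ γ. Let M ≥ 1 and let (s_j, y_j) for j = 1, …, M be pairs of vectors in ℝⁿ with s_j ≠ 0, ‖y_j‖² ≤ ρ² s_jᵀs_j and |s_jᵀy_j| ≤ ρ s_jᵀs_j, and let τ_0, τ_1, …, τ_M be scalars with β ≤ τ_j ≤ β + ρ + γ for all j. For each j define θ_j = (0.8 (τ_j + δ) s_jᵀs_j − γ s_jᵀs_j)/((τ_j + δ) s_jᵀs_j − s_jᵀy_j) if s_jᵀy_j ≤ 0.2 (τ_j + δ) s_jᵀs_j + γ s_jᵀs_j and θ_j = 1 otherwise, and ỹ_j = θ_j y_j + (1 − θ_j)(τ_j +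 δ) s_j − γ s_j. Set B^{(0)} = τ_0 I and recursively B^{(j)} = B^{(j−1)} + (ỹ_j ỹ_jᵀ)/(s_jᵀỹ_j) − (B^{(j−1)} s_j s_jᵀ B^{(j−1)})/(s_jᵀ B^{(j−1)} s_j) + γ I for j = 1, …, M. Then ‖(B^{(M)})⁻¹‖ ≤ Q̃, where Q̃ = (w^{2M} − 1)/(Q + 5ρ + 2√(0.2 (Q + 5ρ)(β + δ))) + β⁻¹ w^{2M}, w = √((Q + 5ρ)/(0.2 (β + δ))) + 1, and Q = max{ 5(ρ + γ)²/(β + δ) + 5(β + δ), 5(ρ + γ)²/(β + ρ + γ + δ) + 5(β + ρ + γ + δ) }; equivalently, every eigenvalue of B^{(M)} is at least Q̃⁻¹. -/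
open Matrix

lemma dot_cs {n : ℕ} (u v : Fin n → ℝ) : (u ⬝ᵥ v)^2 ≤ (u ⬝ᵥ u) * (v ⬝ᵥ v) := by
  simpa [dotProduct, sq] using Finset.sum_mul_sq_le_sq_mul_sq Finset.univ u v

lemma dot_nonneg {n : ℕ} (u : Fin n → ℝ) : 0 ≤ u ⬝ᵥ u :=
  Finset.sum_nonneg fun i _ => mul_self_nonneg _

lemma dot_pos {n : ℕ} {u : Fin n → ℝ} (hu : u ≠ 0) : 0 < u ⬝ᵥ u :=
  lt_of_le_of_ne (dot_nonneg u) (fun h => hu (dotProduct_self_eq_zero.mp h.symm))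

lemma vecMulVec_mulVec' {n : ℕ} (u v z : Fin n → ℝ) :
    vecMulVec u v *ᵥ z = (v ⬝ᵥ z) • u := by
  ext i
  simp only [mulVec, vecMulVec_apply, dotProduct, Pi.smul_apply, smul_eq_mul, Finset.sum_mul]
  congr 1; ext j; ring

lemma vecMulVec_transpose' {n : ℕ} (u v : Fin n → ℝ) :
    (vecMulVec u v)ᵀ = vecMulVec v u := by
  ext i j; simp [vecMulVec_apply, mul_comm]

lemma symm_dot {n : ℕ} {B : Matrix (Fin n) (Fin n) ℝ} (hB : Bᵀ = B) (x y : Fin n → ℝ) :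
    x ⬝ᵥ (B *ᵥ y) = y ⬝ᵥ (B *ᵥ x) := by
  have h1 : x ᵥ* B = B *ᵥ x := by rw [← mulVec_transpose, hB]
  rw [dotProduct_mulVec, h1, dotProduct_comm]

lemma form_cs {n : ℕ} {A : Matrix (Fin n) (Fin n) ℝ} (hA : Aᵀ = A)
    (h0 : ∀ z, 0 ≤ z ⬝ᵥ (A *ᵥ z)) (x y : Fin n → ℝ) :
    (x ⬝ᵥ (A *ᵥ y)) ^ 2 ≤ (x ⬝ᵥ (A *ᵥ x)) * (y ⬝ᵥ (A *ᵥ y)) := by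
  have key : ∀ r : ℝ, 0 ≤ (y ⬝ᵥ (A *ᵥ y)) * (r * r) + (2 * (x ⬝ᵥ (A *ᵥ y))) * r
      + (x ⬝ᵥ (A *ᵥ x)) := by
    intro r
    have h1 := h0 (x + r • y)
    have h2 : (x + r • y) ⬝ᵥ (A *ᵥ (x + r • y))
        = (x ⬝ᵥ (A *ᵥ x)) + 2 * r * (x ⬝ᵥ (A *ᵥ y)) + r ^ 2 * (y ⬝ᵥ (A *ᵥ y)) := by
      rw [mulVec_add, mulVec_smul]
      simp only [dotProduct_add, add_dotProduct, dotProduct_smul, smul_dotProduct, smul_eq_mul]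
      rw [symm_dot hA y x]
      ring
    rw [h2] at h1
    linarith [h1]
  have hd := discrim_le_zero key
  rw [discrim] at hd
  nlinarith [hd]

lemma div_cancel_ineq {c uv vv : ℝ} (hc : 0 ≤ c) (huv : 0 < uv) (h3 : c * uv ^ 2 ≤ uv * vv) :
    c * uv ≤ vv := by nlinarith

lemma form_posdef {n : ℕ} {B : Matrix (Fin n) (Fin n) ℝ} (hsymm : Bᵀ = B) {c : ℝ} (hc : 0 < c)
    (hB : ∀ x, c * (x ⬝ᵥ x) ≤ x ⬝ᵥ (B *ᵥ x)) : B.PosDef := by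
  rw [posDef_iff_dotProduct_mulVec]
  constructor
  · rw [Matrix.IsHermitian, conjTranspose_eq_transpose_of_trivial, hsymm]
  · intro x hx
    have h1 := hB x
    have h2 := dot_pos hx
    have h3 : 0 < c * (x ⬝ᵥ x) := mul_pos hc h2
    simpa [star_trivial] using lt_of_lt_of_le h3 h1

set_option maxHeartbeats 2000000 in
lemma step_bound {n : ℕ} (B B' : Matrix (Fin n) (Fin n) ℝ) (hBsymm : Bᵀ = B)
    (c : ℝ) (hc : 0 < c) (hB : ∀ x, c * (x ⬝ᵥ x) ≤ x ⬝ᵥ (B *ᵥ x))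
    (s yt : Fin n → ℝ) (hs : s ≠ 0) (γ : ℝ) (hγ : 0 < γ)
    (a b : ℝ) (ha : 0 < a) (hb : 0 < b)
    (hP : b * (s ⬝ᵥ s) ≤ s ⬝ᵥ yt) (hN : yt ⬝ᵥ yt ≤ a * (s ⬝ᵥ yt))
    (hB' : B' = B + (s ⬝ᵥ yt)⁻¹ • vecMulVec yt yt
      - (s ⬝ᵥ (B *ᵥ s))⁻¹ • vecMulVec (B *ᵥ s) (s ᵥ* B)
      + γ • (1 : Matrix (Fin n) (Fin n) ℝ)) :
    B'ᵀ = B' ∧ ∀ x, ((Real.sqrt (a / b) + 1) ^ 2 / c + 1 / b)⁻¹ * (x ⬝ᵥ x)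
      ≤ x ⬝ᵥ (B' *ᵥ x) := by
  have hsB : s ᵥ* B = B *ᵥ s := by rw [← mulVec_transpose, hBsymm]
  have hS : 0 < s ⬝ᵥ s := dot_pos hs
  have hPpos : 0 < s ⬝ᵥ yt := lt_of_lt_of_le (mul_pos hb hS) hP
  have hT : c * (s ⬝ᵥ s) ≤ s ⬝ᵥ (B *ᵥ s) := hB s
  have hTpos : 0 < s ⬝ᵥ (B *ᵥ s) := lt_of_lt_of_le (mul_pos hc hS) hT
  set S := s ⬝ᵥ s with hSdef
  set P := s ⬝ᵥ yt with hPdef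
  set T := s ⬝ᵥ (B *ᵥ s) with hTdef
  set k := Real.sqrt (a / b) with hkdef
  have hk0 : 0 ≤ k := Real.sqrt_nonneg _
  have hk2 : k ^ 2 = a / b := Real.sq_sqrt (by positivity)
  have hform0 : ∀ z, 0 ≤ z ⬝ᵥ (B *ᵥ z) := fun z =>
    le_trans (mul_nonneg hc.le (dot_nonneg z)) (hB z)
  -- the matrix without the γ-regularization
  set Cm := B + P⁻¹ • vecMulVec yt yt - T⁻¹ • vecMulVec (B *ᵥ s) (s ᵥ* B) with hCmdef
  have hB'C : B' = Cm + γ • (1 : Matrix (Fin n) (Fin n) ℝ) := hB'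
  -- symmetry
  have hCmsymm : Cmᵀ = Cm := by
    rw [hCmdef, hsB]
    simp only [transpose_add, transpose_sub, transpose_smul, vecMulVec_transpose', hBsymm]
  have hB'symm : B'ᵀ = B' := by
    rw [hB'C]
    simp only [transpose_add, transpose_smul, transpose_one, hCmsymm]
  refine ⟨hB'symm, ?_⟩
  -- mulVec formula for Cm
  have hCmv : ∀ z, Cm *ᵥ z = B *ᵥ z + (P⁻¹ * (yt ⬝ᵥ z)) • yt
      - (T⁻¹ * (s ⬝ᵥ (B *ᵥ z))) • (B *ᵥ s) := by
    intro z
    rw [hCmdef, sub_mulVec, add_mulVec, smul_mulVec, smul_mulVec,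
      vecMulVec_mulVec', vecMulVec_mulVec', hsB, smul_smul, smul_smul]
    congr 2
    rw [dotProduct_mulVec, hsB, dotProduct_comm]
  -- quadratic form of Cm
  have hCmform : ∀ z, z ⬝ᵥ (Cm *ᵥ z)
      = z ⬝ᵥ (B *ᵥ z) + P⁻¹ * (yt ⬝ᵥ z) ^ 2 - T⁻¹ * (s ⬝ᵥ (B *ᵥ z)) ^ 2 := by
    intro z
    rw [hCmv z]
    simp only [dotProduct_add, dotProduct_sub, dotProduct_smul, smul_eq_mul]
    rw [dotProduct_comm z yt, symm_dot hBsymm z s]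
    ring
  -- nonnegativity of the Cm form
  have hCm0 : ∀ z, 0 ≤ z ⬝ᵥ (Cm *ᵥ z) := by
    intro z
    have hz' := hform0 (z - (T⁻¹ * (s ⬝ᵥ (B *ᵥ z))) • s)
    have hexp : (z - (T⁻¹ * (s ⬝ᵥ (B *ᵥ z))) • s) ⬝ᵥ
        (B *ᵥ (z - (T⁻¹ * (s ⬝ᵥ (B *ᵥ z))) • s))
        = z ⬝ᵥ (B *ᵥ z) - T⁻¹ * (s ⬝ᵥ (B *ᵥ z)) ^ 2 := by
      rw [mulVec_sub, mulVec_smul]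
      simp only [dotProduct_sub, sub_dotProduct, dotProduct_smul, smul_dotProduct, smul_eq_mul]
      rw [symm_dot hBsymm z s]
      field_simp
      ring
    rw [hexp] at hz'
    rw [hCmform z]
    have : 0 ≤ P⁻¹ * (yt ⬝ᵥ z) ^ 2 := by positivity
    linarith
  -- main estimate
  intro x
  set X := x ⬝ᵥ x with hXdef
  have hX0 : 0 ≤ X := dot_nonneg x
  set h' := (k + 1) ^ 2 / c + 1 / b with hh'def
  have hh'pos : 0 < h' := by positivity
  have hform : x ⬝ᵥ (B' *ᵥ x) = x ⬝ᵥ (Cm *ᵥ x) + γ * X := by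
    rw [hB'C, add_mulVec, smul_mulVec, one_mulVec, dotProduct_add, dotProduct_smul,
      smul_eq_mul, hXdef]
  rcases eq_or_lt_of_le hX0 with hX | hX
  · -- x = 0
    rw [hform, ← hX]
    simpa using hCm0 x
  -- invert B
  have hpd : B.PosDef := form_posdef hBsymm hc hB
  have hdet : IsUnit B.det := hpd.det_pos.ne'.isUnit
  have hBB : B * B⁻¹ = 1 := mul_nonsing_inv B hdet
  -- auxiliary vectors
  set p := s ⬝ᵥ x with hpdef
  set q := yt ⬝ᵥ x with hqdef
  set v := x - (p / P) • yt with hvdef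
  set u := B⁻¹ *ᵥ v with hudef
  have hBu : B *ᵥ u = v := by
    rw [hudef, mulVec_mulVec, hBB, one_mulVec]
  set ξ := (p - yt ⬝ᵥ u) / P with hξdef
  set yv := u + ξ • s with hyvdef
  have hsv : s ⬝ᵥ v = 0 := by
    rw [hvdef]
    simp only [dotProduct_sub, dotProduct_smul, smul_eq_mul]
    change p - p / P * P = 0
    rw [div_mul_cancel₀ p hPpos.ne', sub_self]
  have hytyv : yt ⬝ᵥ yv = p := by
    rw [hyvdef]
    simp only [dotProduct_add, dotProduct_smul, smul_eq_mul]
    rw [dotProduct_comm yt s, ← hPdef]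
    rw [hξdef]
    field_simp
    ring
  have hByv : B *ᵥ yv = v + ξ • (B *ᵥ s) := by
    rw [hyvdef, mulVec_add, mulVec_smul, hBu]
  have hsByv : s ⬝ᵥ (B *ᵥ yv) = ξ * T := by
    rw [hByv]
    simp only [dotProduct_add, dotProduct_smul, smul_eq_mul, ← hTdef]
    rw [hsv]; ring
  -- the key identity : Cm *ᵥ yv = x
  have hCmyv : Cm *ᵥ yv = x := by
    rw [hCmv yv, hytyv, hsByv, hByv]
    have h1 : T⁻¹ * (ξ * T) = ξ := by field_simp
    rw [h1, hvdef]
    have h2 : P⁻¹ * p = p / P := by field_simp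
    rw [h2]
    abel
  -- Cauchy-Schwarz in the Cm form
  have hcs : (x ⬝ᵥ (Cm *ᵥ yv)) ^ 2 ≤ (x ⬝ᵥ (Cm *ᵥ x)) * (yv ⬝ᵥ (Cm *ᵥ yv)) :=
    form_cs hCmsymm hCm0 x yv
  rw [hCmyv] at hcs
  have hyvCm : yv ⬝ᵥ x = u ⬝ᵥ v + p ^ 2 / P := by
    rw [hyvdef]
    simp only [add_dotProduct, smul_dotProduct, smul_eq_mul]
    have hux : u ⬝ᵥ x = u ⬝ᵥ v + (p / P) * (u ⬝ᵥ yt) := by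
      rw [hvdef]
      simp only [dotProduct_sub, dotProduct_smul, smul_eq_mul]
      ring
    have hsx : s ⬝ᵥ x = p := hpdef.symm
    have hxs : x ⬝ᵥ s = p := by rw [dotProduct_comm]; try exact hpdef.symm
    have huyt : u ⬝ᵥ yt = yt ⬝ᵥ u := dotProduct_comm u yt
    rw [hux, hξdef]
    simp only [hsx, hxs, huyt]
    field_simp
    try ring
  -- bound u ⬝ᵥ v
  have hcu : c * (u ⬝ᵥ u) ≤ u ⬝ᵥ v := by
    have := hB u
    rwa [hBu] at this
  have huv : u ⬝ᵥ v ≤ c⁻¹ * (v ⬝ᵥ v) := by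
    rcases le_or_gt (u ⬝ᵥ v) 0 with h | h
    · have : 0 ≤ c⁻¹ * (v ⬝ᵥ v) := mul_nonneg (inv_nonneg.mpr hc.le) (dot_nonneg v)
      linarith
    · have h1 : c * (u ⬝ᵥ v) ^ 2 ≤ c * ((u ⬝ᵥ u) * (v ⬝ᵥ v)) :=
        mul_le_mul_of_nonneg_left (dot_cs u v) hc.le
      have h2 : c * (u ⬝ᵥ u) * (v ⬝ᵥ v) ≤ (u ⬝ᵥ v) * (v ⬝ᵥ v) :=
        mul_le_mul_of_nonneg_right hcu (dot_nonneg v)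
      have h3 : c * (u ⬝ᵥ v) ^ 2 ≤ (u ⬝ᵥ v) * (v ⬝ᵥ v) := by linarith [h1, h2]
      have h4 : c * (u ⬝ᵥ v) ≤ v ⬝ᵥ v := div_cancel_ineq hc.le h h3
      rw [inv_mul_eq_div, le_div_iff₀ hc]
      linarith [h4]
  -- bound v ⬝ᵥ v
  set N := yt ⬝ᵥ yt with hNdef
  have hN0 : 0 ≤ N := dot_nonneg yt
  have hS0 : 0 ≤ S := hS.le
  have hp2 : p ^ 2 ≤ S * X := dot_cs s x
  have hq2 : q ^ 2 ≤ N * X := by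
    have := dot_cs yt x
    rwa [← hNdef, ← hXdef, ← hqdef] at this
  have hSP : S ≤ P / b := by rw [le_div_iff₀ hb]; linarith
  have hvv : v ⬝ᵥ v = X - 2 * (p / P) * q + (p / P) ^ 2 * N := by
    rw [hvdef]
    simp only [dotProduct_sub, sub_dotProduct, dotProduct_smul, smul_dotProduct, smul_eq_mul]
    have hxyt : x ⬝ᵥ yt = q := by rw [dotProduct_comm]; try exact hqdef.symm
    have hytx : yt ⬝ᵥ x = q := hqdef.symm
    simp only [hxyt, hytx, ← hXdef, ← hNdef]
    try ring
  have sub1 : p ^ 2 * N ≤ k ^ 2 * (P ^ 2 * X) := by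
    have A1 : p ^ 2 * N ≤ (S * X) * (a * P) :=
      mul_le_mul hp2 hN (dot_nonneg yt) (mul_nonneg hS0 hX0)
    have A2 : (S * X) * (a * P) ≤ ((P / b) * X) * (a * P) := by
      have := mul_le_mul_of_nonneg_right hSP hX0
      exact mul_le_mul_of_nonneg_right this (mul_nonneg ha.le hPpos.le)
    have A3 : ((P / b) * X) * (a * P) = k ^ 2 * (P ^ 2 * X) := by
      rw [hk2]; field_simp
    linarith
  have sub2 : -(k * P ^ 2 * X) ≤ p * q * P := by
    have C1 : S * N ≤ (P / b) * (a * P) :=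
      mul_le_mul hSP hN hN0 (by positivity)
    have C2 : (P / b) * (a * P) = (k * P) ^ 2 := by
      rw [mul_pow, hk2]; field_simp
    have B1 : (p * q) ^ 2 ≤ (k * P * X) ^ 2 := by
      have D1 : p ^ 2 * q ^ 2 ≤ (S * X) * (N * X) :=
        mul_le_mul hp2 hq2 (sq_nonneg q) (mul_nonneg hS0 hX0)
      have D2 : (S * X) * (N * X) = (S * N) * X ^ 2 := by ring
      have D3 : (S * N) * X ^ 2 ≤ (k * P) ^ 2 * X ^ 2 :=
        mul_le_mul_of_nonneg_right (le_trans C1 (le_of_eq C2)) (sq_nonneg X)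
      linarith [D1, D2, D3]
    have hkPX0 : 0 ≤ k * P * X := by positivity
    rcases le_or_gt (-(k * P * X)) (p * q) with h | h
    · have := mul_le_mul_of_nonneg_right h hPpos.le
      linarith [this]
    · exfalso
      have h' : k * P * X < -(p * q) := by linarith
      have := mul_self_lt_mul_self hkPX0 h'
      linarith [this, B1]
  have hvvle : v ⬝ᵥ v ≤ (k + 1) ^ 2 * X := by
    have hP2 : (0:ℝ) < P ^ 2 := by positivity
    rw [← mul_le_mul_iff_right₀ hP2, hvv]
    have expand : P ^ 2 * (X - 2 * (p / P) * q + (p / P) ^ 2 * N)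
        = P ^ 2 * X - 2 * (p * q * P) + p ^ 2 * N := by
      field_simp
    rw [expand]
    linarith [sub1, sub2]
  -- bound p^2/P
  have hpP : p ^ 2 / P ≤ X / b := by
    rw [div_le_div_iff₀ hPpos hb]
    have e1 : p ^ 2 * b ≤ (S * X) * b := mul_le_mul_of_nonneg_right hp2 hb.le
    have e2 : (b * S) * X ≤ P * X := mul_le_mul_of_nonneg_right hP hX0
    linarith [e1, e2]
  -- combine
  have hyvx : yv ⬝ᵥ x ≤ h' * X := by
    rw [hyvCm, hh'def]
    have f1 : u ⬝ᵥ v ≤ c⁻¹ * ((k + 1) ^ 2 * X) :=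
      le_trans huv (mul_le_mul_of_nonneg_left hvvle (by positivity))
    have f2 : c⁻¹ * ((k + 1) ^ 2 * X) = (k + 1) ^ 2 / c * X := by field_simp
    have f3 : X / b = 1 / b * X := by ring
    linarith [f1, hpP]
  have hgx0 : 0 ≤ x ⬝ᵥ (Cm *ᵥ x) := hCm0 x
  have hxyv : X ^ 2 ≤ (x ⬝ᵥ (Cm *ᵥ x)) * (h' * X) := by
    have hmono := mul_le_mul_of_nonneg_left hyvx hgx0
    rw [← hXdef] at hcs
    linarith [hcs, hmono]
  have hgx : h'⁻¹ * X ≤ x ⬝ᵥ (Cm *ᵥ x) := by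
    have h1 : X * X ≤ ((x ⬝ᵥ (Cm *ᵥ x)) * h') * X := by linarith [hxyv]
    have h2 : X ≤ (x ⬝ᵥ (Cm *ᵥ x)) * h' := le_of_mul_le_mul_right h1 hX
    calc h'⁻¹ * X ≤ h'⁻¹ * ((x ⬝ᵥ (Cm *ᵥ x)) * h') :=
          mul_le_mul_of_nonneg_left h2 (by positivity)
    _ = x ⬝ᵥ (Cm *ᵥ x) := by field_simp
  rw [hform]
  have hγX : 0 ≤ γ * X := mul_nonneg hγ.le hX0
  linarith [hgx, hγX]

set_option maxHeartbeats 2000000 in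
lemma curvature_facts {n : ℕ} (ρ β γ δ t Q : ℝ)
    (hρ : 0 < ρ) (hβ : 0 < β) (hγ : 0 < γ) (hδ : 0 < δ) (hδγ : γ ≤ 0.8 * δ)
    (ht1 : β + δ ≤ t) (ht2 : t ≤ β + ρ + γ + δ)
    (hQ1 : 5 * (ρ + γ) ^ 2 / (β + δ) + 5 * (β + δ) ≤ Q)
    (hQ2 : 5 * (ρ + γ) ^ 2 / (β + ρ + γ + δ) + 5 * (β + ρ + γ + δ) ≤ Q)
    (s y : Fin n → ℝ) (hs : s ≠ 0)
    (hy : y ⬝ᵥ y ≤ ρ ^ 2 * (s ⬝ᵥ s)) (hsy : |s ⬝ᵥ y| ≤ ρ * (s ⬝ᵥ s))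
    (θ : ℝ)
    (hθ : θ = if s ⬝ᵥ y ≤ 0.2 * (t * (s ⬝ᵥ s)) + γ * (s ⬝ᵥ s)
        then (0.8 * (t * (s ⬝ᵥ s)) - γ * (s ⬝ᵥ s)) / (t * (s ⬝ᵥ s) - s ⬝ᵥ y) else 1)
    (yt : Fin n → ℝ) (hyt : yt = θ • y + ((1 - θ) * t) • s - γ • s) :
    0.2 * (β + δ) * (s ⬝ᵥ s) ≤ s ⬝ᵥ yt ∧ yt ⬝ᵥ yt ≤ (Q + 5 * ρ) * (s ⬝ᵥ yt) := by
  set S := s ⬝ᵥ s with hSdef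
  set σ := s ⬝ᵥ y with hσdef
  have hS : 0 < S := dot_pos hs
  have hβδ : (0:ℝ) < β + δ := by linarith
  have ht0 : 0 < t := lt_of_lt_of_le hβδ ht1
  have hγt : γ < 0.8 * t := by linarith
  have hsqnn : (0:ℝ) ≤ 5 * (ρ + γ) ^ 2 / (β + δ) := by positivity
  have hQ0 : 0 < Q := by linarith
  have h8 : 0 < (0.8 * t - γ) * S := mul_pos (by linarith) hS
  have hys : y ⬝ᵥ s = σ := dotProduct_comm y s
  have hP : s ⬝ᵥ yt = θ * σ + (1 - θ) * t * S - γ * S := by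
    rw [hyt]
    simp only [dotProduct_sub, dotProduct_add, dotProduct_smul, smul_eq_mul]
    try ring
  have key : 0 ≤ θ ∧ θ ≤ 1 ∧ 0.2 * (t * S) ≤ s ⬝ᵥ yt := by
    by_cases hcond : σ ≤ 0.2 * (t * S) + γ * S
    · rw [if_pos hcond] at hθ
      have hden : 0 < t * S - σ := by linarith
      have hnum : 0 ≤ 0.8 * (t * S) - γ * S := by linarith
      have hθ0 : 0 ≤ θ := hθ ▸ div_nonneg hnum hden.le
      have hθ1 : θ ≤ 1 := by
        rw [hθ, div_le_one hden]; linarith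
      have hmul : θ * (t * S - σ) = 0.8 * (t * S) - γ * S := by
        rw [hθ]; field_simp
      refine ⟨hθ0, hθ1, ?_⟩
      have : s ⬝ᵥ yt = 0.2 * (t * S) := by linear_combination hP - hmul
      linarith
    · rw [if_neg hcond] at hθ
      push_neg at hcond
      subst hθ
      refine ⟨zero_le_one, le_refl 1, ?_⟩
      rw [hP]; linarith
  obtain ⟨hθ0, hθ1, hPt⟩ := key
  have h9 : 0 ≤ (t - (β + δ)) * S := mul_nonneg (by linarith) hS.le
  have hPb : 0.2 * (β + δ) * S ≤ s ⬝ᵥ yt := by linarith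
  set c' := (1 - θ) * t - γ with hc'
  have hytc : yt = θ • y + c' • s := by
    rw [hyt, hc']; ext i; simp; ring
  have hN : yt ⬝ᵥ yt = θ ^ 2 * (y ⬝ᵥ y) + 2 * θ * c' * σ + |c'| ^ 2 * S := by
    rw [hytc]
    simp only [dotProduct_add, add_dotProduct, dotProduct_smul, smul_dotProduct, smul_eq_mul,
      hys, ← hSdef, ← hσdef, sq_abs]
    ring
  have h1 : c' * σ ≤ |c'| * (ρ * S) := by
    calc c' * σ ≤ |c' * σ| := le_abs_self _
    _ = |c'| * |σ| := abs_mul _ _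
    _ ≤ |c'| * (ρ * S) := mul_le_mul_of_nonneg_left hsy (abs_nonneg _)
  have hNle : yt ⬝ᵥ yt ≤ (θ * ρ + |c'|) ^ 2 * S := by
    have h2 : θ ^ 2 * (y ⬝ᵥ y) ≤ θ ^ 2 * (ρ ^ 2 * S) :=
      mul_le_mul_of_nonneg_left hy (sq_nonneg θ)
    have h3 : θ * (c' * σ) ≤ θ * (|c'| * (ρ * S)) := mul_le_mul_of_nonneg_left h1 hθ0
    rw [hN]; linarith [h2, h3]
  set mx := max t (ρ + γ) with hmx
  have hm0 : θ * ρ + |c'| ≤ mx := by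
    have hmt : t ≤ mx := le_max_left _ _
    have hmρ : ρ + γ ≤ mx := le_max_right _ _
    rcases le_or_gt 0 c' with hcs | hcs
    · rw [abs_of_nonneg hcs, hc']
      have h5 : θ * ρ ≤ θ * mx := mul_le_mul_of_nonneg_left (by linarith) hθ0
      have h6 : (1 - θ) * t ≤ (1 - θ) * mx := mul_le_mul_of_nonneg_left hmt (by linarith)
      linarith [h5, h6]
    · rw [abs_of_neg hcs, hc']
      have h5 : θ * ρ ≤ 1 * ρ := mul_le_mul_of_nonneg_right hθ1 hρ.le
      have h6 : 0 ≤ (1 - θ) * t := mul_nonneg (by linarith) ht0.le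
      linarith
  have hmsq : mx ^ 2 ≤ 0.2 * t * Q := by
    rcases max_cases t (ρ + γ) with ⟨hme, _⟩ | ⟨hme, _⟩ <;> rw [hmx, hme]
    · have h7 : 5 * (β + ρ + γ + δ) ≤ Q := by
        have : 0 ≤ 5 * (ρ + γ) ^ 2 / (β + ρ + γ + δ) := by positivity
        linarith
      have h10 : t * t ≤ t * (0.2 * Q) :=
        mul_le_mul_of_nonneg_left (by linarith) ht0.le
      linarith [h10]
    · have h7 : 5 * (ρ + γ) ^ 2 / (β + δ) ≤ Q := by linarith
      rw [div_le_iff₀ hβδ] at h7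
      have h10 : Q * (β + δ) ≤ Q * t := mul_le_mul_of_nonneg_left ht1 hQ0.le
      linarith [h7, h10]
  have hm0nonneg : 0 ≤ θ * ρ + |c'| := by positivity
  have hsqle : (θ * ρ + |c'|) ^ 2 ≤ mx ^ 2 := by
    have := mul_le_mul hm0 hm0 hm0nonneg (le_trans hm0nonneg hm0)
    linarith [this]
  have hNle2 : yt ⬝ᵥ yt ≤ 0.2 * t * Q * S :=
    calc yt ⬝ᵥ yt ≤ (θ * ρ + |c'|) ^ 2 * S := hNle
    _ ≤ mx ^ 2 * S := mul_le_mul_of_nonneg_right hsqle hS.le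
    _ ≤ 0.2 * t * Q * S := mul_le_mul_of_nonneg_right hmsq hS.le
  refine ⟨hPb, ?_⟩
  have hQP : Q * (0.2 * (t * S)) ≤ Q * (s ⬝ᵥ yt) := mul_le_mul_of_nonneg_left hPt hQ0.le
  have hPpos : 0 < s ⬝ᵥ yt := lt_of_lt_of_le (mul_pos (mul_pos (by norm_num : (0:ℝ) < 0.2) hβδ) hS) hPb
  have hfin : 0 ≤ 5 * ρ * (s ⬝ᵥ yt) := by positivity
  calc yt ⬝ᵥ yt ≤ 0.2 * t * Q * S := hNle2
  _ = Q * (0.2 * (t * S)) := by ring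
  _ ≤ Q * (s ⬝ᵥ yt) := hQP
  _ ≤ (Q + 5 * ρ) * (s ⬝ᵥ yt) := by linarith

lemma specNorm_le_of_sq {n : ℕ} (A : Matrix (Fin n) (Fin n) ℝ) (h : ℝ) (hh : 0 ≤ h)
    (H : ∀ x : Fin n → ℝ, (A *ᵥ x) ⬝ᵥ (A *ᵥ x) ≤ h ^ 2 * (x ⬝ᵥ x)) :
    specNorm A ≤ h := by
  refine ContinuousLinearMap.opNorm_le_bound _ hh ?_
  intro x
  set x' : Fin n → ℝ := WithLp.equiv 2 (Fin n → ℝ) x with hx'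
  have hx : x = (WithLp.equiv 2 (Fin n → ℝ)).symm x' := by simp [hx']
  rw [hx, WithLp.equiv_symm_apply, Matrix.toEuclideanCLM_toLp, ← WithLp.equiv_symm_apply]
  have hnorm : ∀ v : Fin n → ℝ,
      ‖(WithLp.equiv 2 (Fin n → ℝ)).symm v‖ = Real.sqrt (v ⬝ᵥ v) := by
    intro v
    rw [EuclideanSpace.norm_eq]
    congr 1
    simp [dotProduct, Real.norm_eq_abs, sq_abs, sq]
  rw [hnorm, hnorm]
  rw [← Real.sqrt_sq hh, ← Real.sqrt_mul (sq_nonneg h)]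
  exact Real.sqrt_le_sqrt (H x')

lemma inv_norm_sc {c uu ux xx : ℝ} (hc : 0 < c) (h1 : c * uu ≤ ux) (h2 : ux ^ 2 ≤ uu * xx)
    (huu : 0 ≤ uu) (hxx : 0 ≤ xx) : uu ≤ c⁻¹ ^ 2 * xx := by
  rcases eq_or_lt_of_le huu with h | h
  · have : 0 ≤ c⁻¹ ^ 2 * xx := by positivity
    linarith
  · have h3 : (c * uu) ^ 2 ≤ ux ^ 2 := pow_le_pow_left₀ (mul_nonneg hc.le huu) h1 2
    have h4 : c ^ 2 * uu ^ 2 ≤ uu * xx := by nlinarith [h3, h2]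
    have h5 : c ^ 2 * uu ≤ xx := div_cancel_ineq (by positivity) h h4
    calc uu = c⁻¹ ^ 2 * (c ^ 2 * uu) := by field_simp
    _ ≤ c⁻¹ ^ 2 * xx := mul_le_mul_of_nonneg_left h5 (by positivity)

set_option maxHeartbeats 2000000 in
/-- **Lemma 3, deterministic form.** The inverse of the matrix produced
by the stochastic damped regularized L-BFGS recursion satisfies the spectral-norm bound
`‖(B^{(M)})⁻¹‖ ≤ Q̃`, where
`Q̃ = (w^{2M} − 1)/(Q + 5ρ + 2√(0.2 (Q + 5ρ)(β + δ))) + β⁻¹ w^{2M}` and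
`w = √((Q + 5ρ)/(0.2 (β + δ))) + 1`. -/
theorem sd_reg_lbfgs_norm_lower_bound {n : ℕ} (ρ β γ δ : ℝ)
    (hρ : 0 < ρ) (hβ : 0 < β) (hγ : 0 < γ) (hδ : 0 < δ) (hδγ : γ ≤ 0.8 * δ)
    (M : ℕ) (hM : 1 ≤ M)
    (s y : Fin M → Fin n → ℝ) (hs : ∀ j, s j ≠ 0)
    (hy : ∀ j, y j ⬝ᵥ y j ≤ ρ ^ 2 * (s j ⬝ᵥ s j))
    (hsy : ∀ j, |s j ⬝ᵥ y j| ≤ ρ * (s j ⬝ᵥ s j))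
    (τ : Fin (M + 1) → ℝ) (hτ : ∀ j, β ≤ τ j ∧ τ j ≤ β + ρ + γ)
    (θ : Fin M → ℝ)
    (hθ : ∀ j, θ j = if s j ⬝ᵥ y j ≤ 0.2 * ((τ j.succ + δ) * (s j ⬝ᵥ s j)) + γ * (s j ⬝ᵥ s j)
        then (0.8 * ((τ j.succ + δ) * (s j ⬝ᵥ s j)) - γ * (s j ⬝ᵥ s j))
          / ((τ j.succ + δ) * (s j ⬝ᵥ s j) - s j ⬝ᵥ y j)
        else 1)
    (yt : Fin M → Fin n → ℝ)
    (hyt : ∀ j, yt j = θ j • y j + ((1 - θ j) * (τ j.succ + δ)) • s j - γ • s j)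
    (Bmat : Fin (M + 1) → Matrix (Fin n) (Fin n) ℝ)
    (hB0 : Bmat 0 = τ 0 • (1 : Matrix (Fin n) (Fin n) ℝ))
    (hBrec : ∀ j : Fin M, Bmat j.succ = Bmat j.castSucc
        + (s j ⬝ᵥ yt j)⁻¹ • vecMulVec (yt j) (yt j)
        - (s j ⬝ᵥ (Bmat j.castSucc *ᵥ s j))⁻¹ •
            vecMulVec (Bmat j.castSucc *ᵥ s j) (s j ᵥ* Bmat j.castSucc)
        + γ • (1 : Matrix (Fin n) (Fin n) ℝ))
    (Q : ℝ)
    (hQ : Q = max (5 * (ρ + γ) ^ 2 / (β + δ) + 5 * (β + δ))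
        (5 * (ρ + γ) ^ 2 / (β + ρ + γ + δ) + 5 * (β + ρ + γ + δ)))
    (w : ℝ) (hw : w = Real.sqrt ((Q + 5 * ρ) / (0.2 * (β + δ))) + 1)
    (Qt : ℝ)
    (hQt : Qt = (w ^ (2 * M) - 1)
        / (Q + 5 * ρ + 2 * Real.sqrt (0.2 * ((Q + 5 * ρ) * (β + δ))))
        + β⁻¹ * w ^ (2 * M)) :
    specNorm (Bmat (Fin.last M))⁻¹ ≤ Qt := by
  have hβδ : (0:ℝ) < β + δ := by linarith
  set b := 0.2 * (β + δ) with hbdef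
  have hb : 0 < b := mul_pos (by norm_num) hβδ
  set a := Q + 5 * ρ with hadef
  have hQ1 : 5 * (ρ + γ) ^ 2 / (β + δ) + 5 * (β + δ) ≤ Q := hQ ▸ le_max_left _ _
  have hQ2 : 5 * (ρ + γ) ^ 2 / (β + ρ + γ + δ) + 5 * (β + ρ + γ + δ) ≤ Q :=
    hQ ▸ le_max_right _ _
  have hQpos : 0 < Q := by
    have h1 : 0 ≤ 5 * (ρ + γ) ^ 2 / (β + δ) := by positivity
    linarith
  have ha : 0 < a := by rw [hadef]; linarith
  have hk0 : 0 < Real.sqrt (a / b) := Real.sqrt_pos.mpr (by positivity)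
  have hk2 : Real.sqrt (a / b) ^ 2 = a / b := Real.sq_sqrt (by positivity)
  have hw1 : 1 < w := by rw [hw]; linarith
  have hw2m1 : 0 < w ^ 2 - 1 := by nlinarith [hw1]
  have hβne : (β:ℝ) ≠ 0 := hβ.ne'
  -- the closed-form sequence of bounds
  set hseq : ℕ → ℝ := fun j => β⁻¹ * w ^ (2 * j) + (w ^ (2 * j) - 1) / (b * (w ^ 2 - 1))
    with hseqdef
  have hpow1 : ∀ j : ℕ, 1 ≤ w ^ (2 * j) := fun j => one_le_pow₀ hw1.le
  have hpos : ∀ j, 0 < hseq j := by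
    intro j
    have h1 : 0 < β⁻¹ * w ^ (2 * j) := by
      have : (0:ℝ) < w ^ (2*j) := by linarith [hpow1 j]
      positivity
    have h2 : 0 ≤ (w ^ (2 * j) - 1) / (b * (w ^ 2 - 1)) := by
      apply div_nonneg (by linarith [hpow1 j]) (by positivity)
    simp only [hseqdef]
    linarith
  have hrec : ∀ j : ℕ, hseq (j + 1) = w ^ 2 * hseq j + 1 / b := by
    intro j
    simp only [hseqdef]
    rw [show 2 * (j + 1) = 2 * j + 2 by ring, pow_add]
    field_simp
    ring
  -- the key induction
  have main : ∀ j : ℕ, ∀ hj : j < M + 1, ((Bmat ⟨j, hj⟩)ᵀ = Bmat ⟨j, hj⟩) ∧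
      ∀ x, (hseq j)⁻¹ * (x ⬝ᵥ x) ≤ x ⬝ᵥ (Bmat ⟨j, hj⟩ *ᵥ x) := by
    intro j
    induction j with
    | zero =>
      intro hj
      have h0 : (⟨0, hj⟩ : Fin (M+1)) = 0 := rfl
      rw [h0, hB0]
      constructor
      · simp
      · intro x
        rw [smul_mulVec, one_mulVec, dotProduct_smul, smul_eq_mul]
        have hseq0 : hseq 0 = β⁻¹ := by simp [hseqdef]
        rw [hseq0, inv_inv]
        exact mul_le_mul_of_nonneg_right (hτ 0).1 (dot_nonneg x)
    | succ i ih =>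
      intro hj
      have hiM : i < M := by omega
      have hiM1 : i < M + 1 := by omega
      obtain ⟨ihsymm, ihform⟩ := ih hiM1
      set jf : Fin M := ⟨i, hiM⟩ with hjf
      have hτj := hτ jf.succ
      have ht1 : β + δ ≤ τ jf.succ + δ := by linarith [hτj.1]
      have ht2 : τ jf.succ + δ ≤ β + ρ + γ + δ := by linarith [hτj.2]
      obtain ⟨hPb, hNb⟩ := curvature_facts ρ β γ δ (τ jf.succ + δ) Q hρ hβ hγ hδ hδγ
        ht1 ht2 hQ1 hQ2 (s jf) (y jf) (hs jf) (hy jf) (hsy jf) (θ jf) (hθ jf)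
        (yt jf) (hyt jf)
      have hPb' : b * (s jf ⬝ᵥ s jf) ≤ s jf ⬝ᵥ yt jf := by
        rw [hbdef]; rw [mul_assoc] at hPb ⊢; exact hPb
      have hc : 0 < (hseq i)⁻¹ := inv_pos.mpr (hpos i)
      have hrecj : Bmat (⟨i+1, hj⟩ : Fin (M+1)) = Bmat (⟨i, hiM1⟩ : Fin (M+1))
          + (s jf ⬝ᵥ yt jf)⁻¹ • vecMulVec (yt jf) (yt jf)
          - (s jf ⬝ᵥ (Bmat (⟨i, hiM1⟩ : Fin (M+1)) *ᵥ s jf))⁻¹ •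
              vecMulVec (Bmat (⟨i, hiM1⟩ : Fin (M+1)) *ᵥ s jf)
                (s jf ᵥ* Bmat (⟨i, hiM1⟩ : Fin (M+1)))
          + γ • (1 : Matrix (Fin n) (Fin n) ℝ) := hBrec jf
      obtain ⟨hsymm', hform'⟩ := step_bound (Bmat (⟨i, hiM1⟩ : Fin (M+1)))
        (Bmat (⟨i+1, hj⟩ : Fin (M+1))) ihsymm (hseq i)⁻¹ hc ihform
        (s jf) (yt jf) (hs jf) γ hγ a b ha hb hPb' (hadef ▸ hNb) hrecj
      refine ⟨hsymm', ?_⟩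
      intro x
      have h1 := hform' x
      have hconst : (Real.sqrt (a / b) + 1) ^ 2 / (hseq i)⁻¹ + 1 / b = hseq (i + 1) := by
        rw [hrec i, ← hw]
        congr 1
        rw [div_eq_mul_inv, inv_inv]
      rw [hconst] at h1
      exact h1
  -- conclude
  obtain ⟨hsymmM, hformM⟩ := main M (lt_add_one M)
  have hlast : Fin.last M = (⟨M, lt_add_one M⟩ : Fin (M + 1)) := rfl
  rw [hlast]
  set A := Bmat (⟨M, lt_add_one M⟩ : Fin (M + 1)) with hA
  have hQtM : Qt = hseq M := by
    have hDeq : Q + 5 * ρ + 2 * Real.sqrt (0.2 * ((Q + 5 * ρ) * (β + δ)))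
        = b * (w ^ 2 - 1) := by
      have h1 : 0.2 * ((Q + 5 * ρ) * (β + δ)) = a * b := by rw [hadef, hbdef]; ring
      have hsq : Real.sqrt (a * b) = Real.sqrt (a / b) * b := by
        rw [show a * b = (a / b) * b ^ 2 by field_simp]
        rw [Real.sqrt_mul (by positivity) (b ^ 2), Real.sqrt_sq hb.le]
      have hk2' : Real.sqrt (a / b) ^ 2 * b = a := by
        rw [hk2]; field_simp
      rw [h1, hsq, hw]
      linear_combination -hk2' - hadef
    rw [hQt, hDeq]
    simp only [hseqdef]
    ring
  have hcM : 0 < (hseq M)⁻¹ := inv_pos.mpr (hpos M)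
  have hpd : A.PosDef := form_posdef hsymmM hcM hformM
  have hdet : IsUnit A.det := hpd.det_pos.ne'.isUnit
  have hAA : A * A⁻¹ = 1 := mul_nonsing_inv A hdet
  have hQtpos : 0 < Qt := by rw [hQtM]; exact hpos M
  apply specNorm_le_of_sq _ _ hQtpos.le
  intro x
  have hAu : A *ᵥ (A⁻¹ *ᵥ x) = x := by
    rw [mulVec_mulVec, hAA, one_mulVec]
  set u := A⁻¹ *ᵥ x with hu
  have hcu : (hseq M)⁻¹ * (u ⬝ᵥ u) ≤ u ⬝ᵥ x := by
    have := hformM u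
    rwa [hAu] at this
  have hcs2 : (u ⬝ᵥ x) ^ 2 ≤ (u ⬝ᵥ u) * (x ⬝ᵥ x) := dot_cs u x
  have := inv_norm_sc hcM hcu hcs2 (dot_nonneg u) (dot_nonneg x)
  rwa [inv_inv, ← hQtM] at this
end
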